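/- Let G = UT_3(F_4) be the group of upper unitriangular 3×3 matrices over the field F_4 with four elements (matrices with 1's on the diagonal and 0's below), a group of order 64. Let P_I be the subgroup of matrices whose (2,3)-entry is 0, and P_II the subgroup of matrices whose (1,2)-entry is 0. Then P_I and P_II are normal subgroups of G, each isomorphic to (Z/2)^4, and every subgroup of G isomorphic to (Z/2)^4 is equal to P_I or to P_II. -/

import Mathlib

/-- The field with four elements. -/
notation "F4" => GaloisField 2 2

/-- A `3 × 3` matrix is upper unitriangular if it has `1`s on the diagonal and
`0`s below it. -/
def IsUnitriangular (A : Matrix (Fin 3) (Fin 3) F4) : Prop :=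
  A 0 0 = 1 ∧ A 1 1 = 1 ∧ A 2 2 = 1 ∧ A 1 0 = 0 ∧ A 2 0 = 0 ∧ A 2 1 = 0

private lemma inv_mem_of_mem_submonoid {H : Type*} [Group H] [Finite H]
    (S : Submonoid H) {x : H} (hx : x ∈ S) : x⁻¹ ∈ S := by
  have hpos : 0 < orderOf x := orderOf_pos x
  have h1 : x ^ orderOf x = 1 := pow_orderOf_eq_one x
  have hinv : x⁻¹ = x ^ (orderOf x - 1) := by
    apply inv_eq_of_mul_eq_one_right
    calc x * x ^ (orderOf x - 1) = x ^ (1 + (orderOf x - 1)) := by rw [pow_add, pow_one]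
    _ = 1 := by rw [Nat.add_sub_cancel' hpos, h1]
  rw [hinv]
  exact pow_mem hx _

/-- The unitriangular matrices, as a submonoid of the units of the matrix
ring. -/
noncomputable def UTMon : Submonoid (Matrix (Fin 3) (Fin 3) F4)ˣ where
  carrier := {A | IsUnitriangular A.val}
  one_mem' := by
    simp [IsUnitriangular, Matrix.one_apply]
  mul_mem' := by
    rintro a b ⟨ha00, ha11, ha22, ha10, ha20, ha21⟩ ⟨hb00, hb11, hb22, hb10, hb20, hb21⟩
    refine ⟨?_, ?_, ?_, ?_, ?_, ?_⟩ <;>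
      simp [Units.val_mul, Matrix.mul_apply, Fin.sum_univ_three,
        ha00, ha11, ha22, ha10, ha20, ha21, hb00, hb11, hb22, hb10, hb20, hb21]

/-- The group `G = UT₃(F₄)` of upper unitriangular `3 × 3` matrices over `F₄`,
a group of order 64. -/
noncomputable def UTGroup : Subgroup (Matrix (Fin 3) (Fin 3) F4)ˣ :=
  { UTMon with inv_mem' := fun hx => inv_mem_of_mem_submonoid UTMon hx }

lemma mem_UTGroup_iff {A : (Matrix (Fin 3) (Fin 3) F4)ˣ} :
    A ∈ UTGroup ↔ IsUnitriangular A.val := Iff.rfl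

/-- The subgroup `P_I ≤ G` of unitriangular matrices with vanishing
`(2,3)`-entry, as a submonoid. -/
noncomputable def PIMon : Submonoid ↥UTGroup where
  carrier := {A | ((A : (Matrix (Fin 3) (Fin 3) F4)ˣ) : Matrix (Fin 3) (Fin 3) F4) 1 2 = 0}
  one_mem' := by
    simp [Matrix.one_apply]
  mul_mem' := by
    intro a b ha hb
    obtain ⟨ha00, ha11, ha22, ha10, ha20, ha21⟩ := mem_UTGroup_iff.mp a.2
    obtain ⟨hb00, hb11, hb22, hb10, hb20, hb21⟩ := mem_UTGroup_iff.mp b.2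
    show ((a * b : ↥UTGroup) : (Matrix (Fin 3) (Fin 3) F4)ˣ).val 1 2 = 0
    simp only [Subgroup.coe_mul, Units.val_mul, Matrix.mul_apply, Fin.sum_univ_three]
    simp_all

/-- The subgroup `P_II ≤ G` of unitriangular matrices with vanishing
`(1,2)`-entry, as a submonoid. -/
noncomputable def PIIMon : Submonoid ↥UTGroup where
  carrier := {A | ((A : (Matrix (Fin 3) (Fin 3) F4)ˣ) : Matrix (Fin 3) (Fin 3) F4) 0 1 = 0}
  one_mem' := by
    simp [Matrix.one_apply]
  mul_mem' := by
    intro a b ha hb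
    obtain ⟨ha00, ha11, ha22, ha10, ha20, ha21⟩ := mem_UTGroup_iff.mp a.2
    obtain ⟨hb00, hb11, hb22, hb10, hb20, hb21⟩ := mem_UTGroup_iff.mp b.2
    show ((a * b : ↥UTGroup) : (Matrix (Fin 3) (Fin 3) F4)ˣ).val 0 1 = 0
    simp only [Subgroup.coe_mul, Units.val_mul, Matrix.mul_apply, Fin.sum_univ_three]
    simp_all

/-- `P_I`, the subgroup of matrices with vanishing `(2,3)`-entry. -/
noncomputable def PI : Subgroup ↥UTGroup :=
  { PIMon with inv_mem' := fun hx => inv_mem_of_mem_submonoid PIMon hx }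

/-- `P_II`, the subgroup of matrices with vanishing `(1,2)`-entry. -/
noncomputable def PII : Subgroup ↥UTGroup :=
  { PIIMon with inv_mem' := fun hx => inv_mem_of_mem_submonoid PIIMon hx }

/-!
Write a unitriangular matrix through its entries `a = A₀₁`, `b = A₀₂`, `c = A₁₂` (indices from 0,
as in `Matrix (Fin 3) (Fin 3)`). Then `a` and `c` are additive under multiplication, while `b`
picks up the term `a c'`; so `P_I` and `P_II` are the kernels of the homomorphisms `A ↦ c` and
`A ↦ a` onto `F₄`, and have order `64 / 4 = 16`. In characteristic two, `A² = 1` iff `a c = 0`,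
and `A` commutes with `A'` iff `a c' = a' c`. An elementary abelian subgroup containing an element
with `c ≠ 0` (hence `a = 0`) must therefore consist of elements with `a = 0`: it lies in `P_I` or
in `P_II`, and equals it by counting.
-/

theorem Module.nonempty_linearEquiv_fin_fun_of_card_eq {K V : Type*} [Field K] [Finite K]
    [AddCommGroup V] [Module K V] [Finite V] {n : ℕ} (hcard : Nat.card V = Nat.card K ^ n) :
    Nonempty (V ≃ₗ[K] (Fin n → K)) := by
  have : Module.Finite K V := .of_finite
  have hrank : Module.finrank K V = n :=
    Nat.pow_right_injective (Finite.one_lt_card (α := K)) <| by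
      dsimp only
      rw [← Module.natCard_eq_pow_finrank, hcard]
  exact ⟨(Module.finBasisOfFinrankEq K V hrank).equivFun⟩

theorem nonempty_mulEquiv_multiplicative_zmod_pi_of_pow_eq_one {p n : ℕ} [Fact p.Prime]
    {H : Type*} [CommGroup H] [Finite H] (hexp : ∀ x : H, x ^ p = 1)
    (hcard : Nat.card H = p ^ n) : Nonempty (H ≃* Multiplicative (Fin n → ZMod p)) := by
  let _ : Module (ZMod p) (Additive H) := AddCommGroup.zmodModule hexp
  obtain ⟨e⟩ := Module.nonempty_linearEquiv_fin_fun_of_card_eq (K := ZMod p) (V := Additive H)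
    (n := n) (by rw [Nat.card_zmod]; exact hcard)
  exact ⟨AddEquiv.toMultiplicative e.toAddEquiv⟩

theorem nonempty_mulEquiv_multiplicative_zmod_two_pi_iff {H : Type*} [Group H] [Finite H]
    (n : ℕ) :
    Nonempty (H ≃* Multiplicative (Fin n → ZMod 2)) ↔
      (∀ x : H, x ^ 2 = 1) ∧ Nat.card H = 2 ^ n := by
  constructor
  · rintro ⟨e⟩
    refine ⟨fun x => e.injective ?_, ?_⟩
    · rw [map_pow, map_one, ← toAdd_eq_zero, toAdd_pow]
      exact funext fun i => CharTwo.two_nsmul _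
    · rw [Nat.card_congr e.toEquiv]
      simp
  · rintro ⟨hsq, hcard⟩
    let _ : CommGroup H :=
      { mul_comm := fun x y =>
          Commute.of_orderOf_dvd_two (fun g => orderOf_dvd_of_pow_eq_one (hsq g)) x y }
    exact nonempty_mulEquiv_multiplicative_zmod_pi_of_pow_eq_one hsq hcard

theorem MonoidHom.card_ker_mul_card_of_surjective {G M : Type*} [Group G] [Group M]
    {f : G →* M} (hf : Function.Surjective f) : Nat.card f.ker * Nat.card M = Nat.card G := by
  rw [← f.ker.card_mul_index, Subgroup.index_ker, f.range_eq_top.mpr hf, Subgroup.card_top]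

theorem card_F4 : Nat.card F4 = 4 :=
  GaloisField.card 2 2 two_ne_zero

local notation "M₃" => Matrix (Fin 3) (Fin 3) F4

namespace UTGroup

noncomputable def entry (A : UTGroup) (i j : Fin 3) : F4 :=
  ((A : M₃ˣ) : M₃) i j

theorem ext_entry {A B : UTGroup} (h01 : entry A 0 1 = entry B 0 1)
    (h02 : entry A 0 2 = entry B 0 2) (h12 : entry A 1 2 = entry B 1 2) : A = B := by
  obtain ⟨a00, a11, a22, a10, a20, a21⟩ := A.2
  obtain ⟨b00, b11, b22, b10, b20, b21⟩ := B.2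
  refine Subtype.ext (Units.ext (Matrix.ext fun i j => ?_))
  fin_cases i <;> fin_cases j <;> simp_all [entry]

theorem entry_mul_01 (A B : UTGroup) : entry (A * B) 0 1 = entry A 0 1 + entry B 0 1 := by
  obtain ⟨a00, -, -, -, -, -⟩ := A.2
  obtain ⟨-, b11, -, -, -, b21⟩ := B.2
  simp [entry, Matrix.mul_apply, Fin.sum_univ_three, a00, b11, b21, add_comm]

theorem entry_mul_02 (A B : UTGroup) :
    entry (A * B) 0 2 = entry A 0 2 + entry A 0 1 * entry B 1 2 + entry B 0 2 := by
  obtain ⟨a00, -, -, -, -, -⟩ := A.2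
  obtain ⟨-, -, b22, -, -, -⟩ := B.2
  simp only [entry, Subgroup.coe_mul, Units.val_mul, Matrix.mul_apply, Fin.sum_univ_three, a00,
    b22, one_mul, mul_one]
  ring

theorem entry_mul_12 (A B : UTGroup) : entry (A * B) 1 2 = entry A 1 2 + entry B 1 2 := by
  obtain ⟨-, a11, -, a10, -, -⟩ := A.2
  obtain ⟨-, -, b22, -, -, -⟩ := B.2
  simp [entry, Matrix.mul_apply, Fin.sum_univ_three, a11, b22, a10, add_comm]

theorem entry_one {i j : Fin 3} (h : i ≠ j) : entry 1 i j = 0 := by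
  simp [entry, Matrix.one_apply_ne h]

theorem isUnit_unitriangular (a b c : F4) : IsUnit !![1, a, b; 0, 1, c; 0, 0, 1] := by
  simp [Matrix.isUnit_iff_isUnit_det, Matrix.det_fin_three]

noncomputable def mk (a b c : F4) : UTGroup :=
  ⟨(isUnit_unitriangular a b c).unit, by simp [mem_UTGroup_iff, IsUnitriangular]⟩

@[simp]
theorem entry_mk_01 (a b c : F4) : entry (mk a b c) 0 1 = a := by
  simp [entry, mk]

@[simp]
theorem entry_mk_02 (a b c : F4) : entry (mk a b c) 0 2 = b := by
  simp [entry, mk]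

@[simp]
theorem entry_mk_12 (a b c : F4) : entry (mk a b c) 1 2 = c := by
  simp [entry, mk]

noncomputable def coordEquiv : UTGroup ≃ F4 × F4 × F4 where
  toFun A := (entry A 0 1, entry A 0 2, entry A 1 2)
  invFun x := mk x.1 x.2.1 x.2.2
  left_inv A := ext_entry (entry_mk_01 ..) (entry_mk_02 ..) (entry_mk_12 ..)
  right_inv x := by simp

theorem card_eq : Nat.card UTGroup = 64 := by
  rw [Nat.card_congr coordEquiv, Nat.card_prod, Nat.card_prod, card_F4]

noncomputable def entry01Hom : UTGroup →* Multiplicative F4 where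
  toFun A := .ofAdd (entry A 0 1)
  map_one' := by rw [entry_one (by decide), ofAdd_zero]
  map_mul' A B := by rw [entry_mul_01, ofAdd_add]

noncomputable def entry12Hom : UTGroup →* Multiplicative F4 where
  toFun A := .ofAdd (entry A 1 2)
  map_one' := by rw [entry_one (by decide), ofAdd_zero]
  map_mul' A B := by rw [entry_mul_12, ofAdd_add]

theorem entry01Hom_surjective : Function.Surjective entry01Hom :=
  fun a => ⟨mk a.toAdd 0 0, by simp [entry01Hom]⟩

theorem entry12Hom_surjective : Function.Surjective entry12Hom :=
  fun c => ⟨mk 0 0 c.toAdd, by simp [entry12Hom]⟩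

theorem sq_eq_one_iff (A : UTGroup) : A ^ 2 = 1 ↔ entry A 0 1 * entry A 1 2 = 0 := by
  rw [sq]
  constructor
  · intro h
    have h02 := congrArg (entry · 0 2) h
    simp only [entry_mul_02, entry_one (show (0 : Fin 3) ≠ 2 by decide)] at h02
    linear_combination h02 - CharTwo.add_self_eq_zero (entry A 0 2)
  · intro h
    apply ext_entry
    · rw [entry_mul_01, CharTwo.add_self_eq_zero, entry_one (by decide)]
    · rw [entry_mul_02, h, add_zero, CharTwo.add_self_eq_zero, entry_one (by decide)]
    · rw [entry_mul_12, CharTwo.add_self_eq_zero, entry_one (by decide)]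

theorem commute_iff (A B : UTGroup) :
    Commute A B ↔ entry A 0 1 * entry B 1 2 = entry B 0 1 * entry A 1 2 := by
  constructor
  · intro h
    have h02 := congrArg (entry · 0 2) h.eq
    simp only [entry_mul_02] at h02
    linear_combination h02
  · intro h
    apply ext_entry
    · rw [entry_mul_01, entry_mul_01, add_comm]
    · rw [entry_mul_02, entry_mul_02]
      linear_combination h
    · rw [entry_mul_12, entry_mul_12, add_comm]

end UTGroup

open UTGroup

theorem PI_eq_ker : PI = entry12Hom.ker := by
  ext A
  exact ofAdd_eq_one.symm

theorem PII_eq_ker : PII = entry01Hom.ker := by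
  ext A
  exact ofAdd_eq_one.symm

theorem card_PI : Nat.card PI = 2 ^ 4 := by
  have := entry12Hom.card_ker_mul_card_of_surjective entry12Hom_surjective
  rw [← PI_eq_ker, card_eq, Nat.card_congr Multiplicative.toAdd, card_F4] at this
  omega

theorem card_PII : Nat.card PII = 2 ^ 4 := by
  have := entry01Hom.card_ker_mul_card_of_surjective entry01Hom_surjective
  rw [← PII_eq_ker, card_eq, Nat.card_congr Multiplicative.toAdd, card_F4] at this
  omega

theorem nonempty_mulEquiv_PI : Nonempty (PI ≃* Multiplicative (Fin 4 → ZMod 2)) := by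
  refine (nonempty_mulEquiv_multiplicative_zmod_two_pi_iff 4).mpr ⟨fun A => ?_, card_PI⟩
  have hA : entry A 1 2 = 0 := A.2
  exact Subtype.ext <| (sq_eq_one_iff A).mpr (by rw [hA, mul_zero])

theorem nonempty_mulEquiv_PII : Nonempty (PII ≃* Multiplicative (Fin 4 → ZMod 2)) := by
  refine (nonempty_mulEquiv_multiplicative_zmod_two_pi_iff 4).mpr ⟨fun A => ?_, card_PII⟩
  have hA : entry A 0 1 = 0 := A.2
  exact Subtype.ext <| (sq_eq_one_iff A).mpr (by rw [hA, zero_mul])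

theorem le_PI_or_le_PII_of_sq_eq_one (H : Subgroup UTGroup) (hH : ∀ A : H, A ^ 2 = 1) :
    H ≤ PI ∨ H ≤ PII := by
  have hsq (A : UTGroup) (hA : A ∈ H) : entry A 0 1 * entry A 1 2 = 0 :=
    (sq_eq_one_iff A).mp (congrArg Subtype.val (hH ⟨A, hA⟩))
  have hcomm (A B : UTGroup) (hA : A ∈ H) (hB : B ∈ H) : Commute A B :=
    (Commute.of_orderOf_dvd_two (fun C => orderOf_dvd_of_pow_eq_one (hH C))
      ⟨A, hA⟩ ⟨B, hB⟩).map H.subtype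
  rw [or_iff_not_imp_left, SetLike.not_le_iff_exists]
  rintro ⟨A, hAH, hAPI⟩ B hBH
  have hA12 : entry A 1 2 ≠ 0 := hAPI
  have hA01 : entry A 0 1 = 0 := (mul_eq_zero.mp (hsq A hAH)).resolve_right hA12
  have hAB := (commute_iff A B).mp (hcomm A B hAH hBH)
  rw [hA01, zero_mul] at hAB
  exact (mul_eq_zero.mp hAB.symm).resolve_right hA12

/-- In `G = UT₃(F₄)`: the subgroups `P_I` and `P_II` are normal, each is
isomorphic to `(Z/2)⁴`, and every subgroup of `G` isomorphic to `(Z/2)⁴`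
equals `P_I` or `P_II`. -/
theorem elementary_abelian_rank_four_subgroups_of_UT3F4 :
    PI.Normal ∧ PII.Normal ∧
    Nonempty (↥PI ≃* Multiplicative (Fin 4 → ZMod 2)) ∧
    Nonempty (↥PII ≃* Multiplicative (Fin 4 → ZMod 2)) ∧
    ∀ H : Subgroup ↥UTGroup,
      Nonempty (↥H ≃* Multiplicative (Fin 4 → ZMod 2)) → H = PI ∨ H = PII := by
  refine ⟨PI_eq_ker ▸ entry12Hom.normal_ker, PII_eq_ker ▸ entry01Hom.normal_ker,
    nonempty_mulEquiv_PI, nonempty_mulEquiv_PII, fun H hH => ?_⟩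
  obtain ⟨hsq, hcard⟩ := (nonempty_mulEquiv_multiplicative_zmod_two_pi_iff 4).mp hH
  rcases le_PI_or_le_PII_of_sq_eq_one H hsq with hle | hle
  · exact .inl (Subgroup.eq_of_le_of_card_ge hle (by rw [card_PI, hcard]))
  · exact .inr (Subgroup.eq_of_le_of_card_ge hle (by rw [card_PII, hcard]))
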